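/- With the same Hopf–Galois setup, the translation map satisfies (id_P ⊗_B Δ_P) ∘ qtrs = (qtrs ⊗ id_H) ∘ Δ, i.e. [g]₁ ⊗_B Δ_P([g]₂) = [g⁽¹⁾]₁ ⊗_B [g⁽¹⁾]₂ ⊗ g⁽²⁾ for all g ∈ H. -/
import Mathlib


open TensorProduct

set_option maxHeartbeats 1000000
set_option synthInstance.maxHeartbeats 400000

noncomputable section

/-- in the Hopf–Galois setup, the translation map satisfies
`(id_P ⊗_B Δ_P) ∘ qtrs = (qtrs ⊗ id_H) ∘ Δ`, i.e.
`[g]₁ ⊗_B Δ_P([g]₂) = [g⁽¹⁾]₁ ⊗_B [g⁽¹⁾]₂ ⊗ g⁽²⁾` for all `g ∈ H`.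
Here `P ⊗_B P` is encoded as a module `T` with a balanced bilinear map `mk` whose pure
tensors span, and `Lt : T → T ⊗ H` is the map induced by `id_P ⊗_B Δ_P`. -/
theorem qtrs_comodule (H P : Type*) [Ring H] [HopfAlgebra ℂ H] [Ring P] [Algebra ℂ P]
    (ΔP : P →ₗ[ℂ] P ⊗[ℂ] H)
    (hPmul : ∀ x y : P, ΔP (x * y) = ΔP x * ΔP y) (hPone : ΔP 1 = 1)
    (hcounit : ∀ x : P,
      (TensorProduct.rid ℂ P)
        ((TensorProduct.map LinearMap.id (Coalgebra.counit (R := ℂ))) (ΔP x)) = x)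
    (hcoassoc : ∀ x : P,
      (TensorProduct.assoc ℂ P H H)
        ((TensorProduct.map ΔP LinearMap.id) (ΔP x)) =
      (TensorProduct.map LinearMap.id (Coalgebra.comul (R := ℂ))) (ΔP x))
    -- `T` plays the role of `P ⊗_B P`, with `B` the coinvariant subalgebra
    (T : Type*) [AddCommGroup T] [Module ℂ T]
    (mk : P →ₗ[ℂ] P →ₗ[ℂ] T)
    (hbal : ∀ (x y b : P), ΔP b = b ⊗ₜ[ℂ] 1 → mk (x * b) y = mk x (b * y))
    (hgen : Submodule.span ℂ {t : T | ∃ x y : P, t = mk x y} = ⊤)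
    (βt : T →ₗ[ℂ] P ⊗[ℂ] H)
    (hβ : ∀ x y : P, βt (mk x y) = (x ⊗ₜ[ℂ] (1 : H)) * ΔP y)
    (hbij : Function.Bijective βt)
    (qtrs : H →ₗ[ℂ] T) (hq : ∀ g : H, βt (qtrs g) = (1 : P) ⊗ₜ[ℂ] g)
    (Lt : T →ₗ[ℂ] T ⊗[ℂ] H)
    (hLt : ∀ x y : P, Lt (mk x y) = (TensorProduct.map (mk x) LinearMap.id) (ΔP y)) :
    ∀ g : H, Lt (qtrs g) =
      (TensorProduct.map qtrs LinearMap.id) (Coalgebra.comul (R := ℂ) g) := by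
  classical
  intro g
  -- injectivity of βt ⊗ id
  have hinj : Function.Injective
      (TensorProduct.map βt (LinearMap.id (R := ℂ) (M := H))) := by
    have heq : TensorProduct.map βt (LinearMap.id (R := ℂ) (M := H))
        = (TensorProduct.congr (LinearEquiv.ofBijective βt hbij)
            (LinearEquiv.refl ℂ H)).toLinearMap := by
      apply TensorProduct.ext'
      intro x y; rfl
    rw [heq]
    exact (TensorProduct.congr (LinearEquiv.ofBijective βt hbij)
      (LinearEquiv.refl ℂ H)).injective
  apply hinj
  have hmul : ∀ (x : P) (w : P ⊗[ℂ] H),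
      (x ⊗ₜ[ℂ] (1 : H)) * w
        = TensorProduct.map (LinearMap.mulLeft ℂ x) LinearMap.id w := by
    intro x w
    induction w using TensorProduct.induction_on with
    | zero => simp
    | tmul p a => simp [Algebra.TensorProduct.tmul_mul_tmul]
    | add u v hu hv => simp [mul_add, hu, hv]
  have haux : ∀ (x : P) (w : P ⊗[ℂ] (H ⊗[ℂ] H)),
      TensorProduct.map (LinearMap.mulLeft ℂ (x ⊗ₜ[ℂ] (1 : H))) LinearMap.id
          ((TensorProduct.assoc ℂ P H H).symm w)
        = (TensorProduct.assoc ℂ P H H).symm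
          (TensorProduct.map (LinearMap.mulLeft ℂ x) LinearMap.id w) := by
    intro x w
    induction w using TensorProduct.induction_on with
    | zero => simp
    | tmul p u =>
      induction u using TensorProduct.induction_on with
      | zero => simp
      | tmul a b =>
        simp [TensorProduct.assoc_symm_tmul, Algebra.TensorProduct.tmul_mul_tmul]
      | add u v hu hv =>
        simp only [TensorProduct.tmul_add, map_add] at *
        rw [hu, hv]
    | add u v hu hv => simp [hu, hv]
  have key : ∀ t : T,
      TensorProduct.map βt LinearMap.id (Lt t)
        = (TensorProduct.assoc ℂ P H H).symm
            ((TensorProduct.map LinearMap.id (Coalgebra.comul (R := ℂ))) (βt t)) := by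
    intro t
    have ht : t ∈ Submodule.span ℂ {t : T | ∃ x y : P, t = mk x y} := by
      rw [hgen]; trivial
    induction ht using Submodule.span_induction with
    | mem t h =>
      obtain ⟨x, y, rfl⟩ := h
      rw [hLt, hβ]
      have step1 : ∀ w : P ⊗[ℂ] H,
          TensorProduct.map βt LinearMap.id (TensorProduct.map (mk x) LinearMap.id w)
            = TensorProduct.map (LinearMap.mulLeft ℂ (x ⊗ₜ[ℂ] (1 : H))) LinearMap.id
                (TensorProduct.map ΔP LinearMap.id w) := by
        intro w
        induction w using TensorProduct.induction_on with
        | zero => simp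
        | tmul p a => simp [hβ]
        | add u v hu hv => simp [hu, hv]
      have step2 : ∀ w : P ⊗[ℂ] H,
          TensorProduct.map LinearMap.id (Coalgebra.comul (R := ℂ))
              (TensorProduct.map (LinearMap.mulLeft ℂ x) LinearMap.id w)
            = TensorProduct.map (LinearMap.mulLeft ℂ x) LinearMap.id
                (TensorProduct.map LinearMap.id (Coalgebra.comul (R := ℂ)) w) := by
        intro w
        induction w using TensorProduct.induction_on with
        | zero => simp
        | tmul p a => simp
        | add u v hu hv => simp [hu, hv]
      have hco : (TensorProduct.map ΔP LinearMap.id) (ΔP y)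
          = (TensorProduct.assoc ℂ P H H).symm
              ((TensorProduct.map LinearMap.id (Coalgebra.comul (R := ℂ))) (ΔP y)) := by
        rw [← hcoassoc y, LinearEquiv.symm_apply_apply]
      rw [step1, hco, haux, hmul, step2]
    | zero => simp
    | add u v hu hv h1 h2 => simp [h1, h2]
    | smul c u hu h1 => simp [h1]
  rw [key (qtrs g), hq]
  have rhs : TensorProduct.map βt LinearMap.id
      ((TensorProduct.map qtrs LinearMap.id) (Coalgebra.comul (R := ℂ) g))
      = (TensorProduct.assoc ℂ P H H).symm
          ((1 : P) ⊗ₜ[ℂ] (Coalgebra.comul (R := ℂ) g)) := by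
    generalize Coalgebra.comul (R := ℂ) g = u
    induction u using TensorProduct.induction_on with
    | zero => simp
    | tmul a b => simp [hq, TensorProduct.assoc_symm_tmul]
    | add u v hu hv => simp [TensorProduct.tmul_add, hu, hv]
  rw [rhs]
  simp

end
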